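/- Let ξ_1, ..., ξ_m be i.i.d. standard exponential random variables and ρ_R > 0. Define SINR_r = ξ_r / (1/ρ_R + Σ_{ℓ≠r} ξ_ℓ). Then for each fixed r, the cumulative distribution function of SINR_r is F(x) = 1 - e^{-x/ρ_R} / (1+x)^{m-1} for x ≥ 0. -/

import Mathlib

/-!
Conditionally on the interference `S = ∑_{ℓ ≠ r} ξ_ℓ`, which is independent of `ξ_r` and
nonnegative, the event `SINR_r ≤ x` is `ξ_r ≤ x (1/ρ_R + S)` and has probability
`1 - e^{-x/ρ_R} e^{-x S}`. Averaging over `S` leaves the Laplace transform `E[e^{-x S}]`, which by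
independence is the product of `m - 1` exponential Laplace transforms `1 / (1 + x)`.
-/

open MeasureTheory ProbabilityTheory Real Finset

namespace ProbabilityTheory

variable {Ω : Type*} {mΩ : MeasurableSpace Ω} {μ : Measure Ω} {r t : ℝ}

lemma ae_nonneg_expMeasure (r : ℝ) : ∀ᵐ x ∂expMeasure r, 0 ≤ x := by
  rw [expMeasure, gammaMeasure,
    ae_withDensity_iff (f := gammaPDF 1 r) (measurable_gammaPDFReal 1 r).ennreal_ofReal]
  refine .of_forall fun x hx => ?_
  by_contra! h
  exact hx (gammaPDF_of_neg h)

lemma lintegral_exp_mul_expMeasure (ht : t < r) :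
    ∫⁻ x, ENNReal.ofReal (exp (t * x)) ∂expMeasure r = ENNReal.ofReal (r / (r - t)) := by
  have hrt : 0 < r - t := sub_pos.2 ht
  have hdens (x : ℝ) : exponentialPDF r x * ENNReal.ofReal (exp (t * x))
      = ENNReal.ofReal (r / (r - t)) * exponentialPDF (r - t) x := by
    rcases lt_or_ge x 0 with hx | hx
    · simp [exponentialPDF_of_neg hx]
    rw [exponentialPDF_of_nonneg hx, exponentialPDF_of_nonneg hx]
    rcases le_or_gt r 0 with hr | hr
    -- for `r ≤ 0` both sides are `ENNReal.ofReal` of a nonpositive number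
    · rw [ENNReal.ofReal_of_nonpos (by nlinarith [exp_pos (-(r * x))]),
        ENNReal.ofReal_of_nonpos (div_nonpos_of_nonpos_of_nonneg hr hrt.le)]
      simp
    rw [← ENNReal.ofReal_mul (by positivity), ← ENNReal.ofReal_mul (by positivity)]
    congr 1
    rw [mul_assoc, ← exp_add, ← mul_assoc, div_mul_cancel₀ _ hrt.ne']
    ring_nf
  calc ∫⁻ x, ENNReal.ofReal (exp (t * x)) ∂expMeasure r
      = ∫⁻ x, exponentialPDF r x * ENNReal.ofReal (exp (t * x)) :=
        lintegral_withDensity_eq_lintegral_mul₀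
          (measurable_exponentialPDFReal r).ennreal_ofReal.aemeasurable (by fun_prop)
    _ = ENNReal.ofReal (r / (r - t)) := by
        simp_rw [hdens]
        rw [lintegral_const_mul' _ _ ENNReal.ofReal_ne_top, lintegral_exponentialPDF_eq_one hrt,
          mul_one]

lemma mgf_id_expMeasure (hr : 0 ≤ r) (ht : t < r) : mgf id (expMeasure r) t = r / (r - t) := by
  rw [mgf, integral_eq_lintegral_of_nonneg_ae (.of_forall fun _ => (exp_pos _).le) (by fun_prop)]
  simp only [id]
  rw [lintegral_exp_mul_expMeasure ht, ENNReal.toReal_ofReal (div_nonneg hr (sub_pos.2 ht).le)]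

lemma hasLaw_expMeasure_of_cdf [IsProbabilityMeasure μ] {X : Ω → ℝ} (hX : Measurable X)
    (hr : 0 < r) (hcdf : ∀ t, μ {ω | X ω ≤ t} = ENNReal.ofReal (1 - exp (-(r * t)))) :
    HasLaw X (expMeasure r) μ where
  aemeasurable := hX.aemeasurable
  map_eq := by
    have := isProbabilityMeasure_expMeasure hr
    refine Measure.ext_of_Iic _ _ fun t => ?_
    rw [Measure.map_apply hX measurableSet_Iic, ← ofReal_cdf, cdf_expMeasure_eq hr]
    split_ifs with ht
    · exact hcdf t
    · rw [ENNReal.ofReal_zero, ← nonpos_iff_eq_zero, ← ENNReal.ofReal_zero]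
      calc μ (X ⁻¹' Set.Iic t) ≤ μ {ω | X ω ≤ 0} :=
            measure_mono fun ω hω => (not_le.1 ht).le.trans' hω
        _ = ENNReal.ofReal 0 := by rw [hcdf, mul_zero, neg_zero, exp_zero, sub_self]

lemma HasLaw.ae_nonneg_of_expMeasure {X : Ω → ℝ} (hX : HasLaw X (expMeasure r) μ) :
    ∀ᵐ ω ∂μ, 0 ≤ X ω :=
  (hX.ae_iff measurableSet_Ici.mem).2 (ae_nonneg_expMeasure r)

lemma HasLaw.mgf_expMeasure {X : Ω → ℝ} (hX : HasLaw X (expMeasure r) μ) (hr : 0 ≤ r)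
    (ht : t < r) : mgf X μ t = r / (r - t) := by
  rw [← mgf_id_map hX.aemeasurable, hX.map_eq, mgf_id_expMeasure hr ht]

lemma IndepFun.measure_le_eq_one_sub_mgf [IsProbabilityMeasure μ] {X Y : Ω → ℝ}
    (hXY : IndepFun X Y μ) (hr : 0 < r) (hX : HasLaw X (expMeasure r) μ) (hY : AEMeasurable Y μ)
    (hY₀ : ∀ᵐ ω ∂μ, 0 ≤ Y ω) :
    μ {ω | X ω ≤ Y ω} = ENNReal.ofReal (1 - mgf Y μ (-r)) := by
  have := isProbabilityMeasure_expMeasure hr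
  have hle : MeasurableSet {p : ℝ × ℝ | p.2 ≤ p.1} :=
    measurableSet_le measurable_snd measurable_fst
  have hcdf_Y : ∀ᵐ ω ∂μ,
      expMeasure r (Set.Iic (Y ω)) = ENNReal.ofReal (1 - exp (-(r * Y ω))) := by
    filter_upwards [hY₀] with ω hω
    rw [← ofReal_cdf, cdf_expMeasure_eq hr, if_pos hω]
  have hexp_le : ∀ᵐ ω ∂μ, exp (-(r * Y ω)) ≤ 1 := by
    filter_upwards [hY₀] with ω hω
    exact exp_le_one_iff.2 (neg_nonpos.2 (mul_nonneg hr.le hω))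
  have hexp_int : Integrable (fun ω => exp (-(r * Y ω))) μ :=
    .of_mem_Icc 0 1 (by fun_prop) (hexp_le.mono fun _ h => ⟨(exp_pos _).le, h⟩)
  have hint : Integrable (fun ω => 1 - exp (-(r * Y ω))) μ := (integrable_const 1).sub hexp_int
  calc μ {ω | X ω ≤ Y ω} = μ.map (fun ω => (Y ω, X ω)) {p | p.2 ≤ p.1} :=
        (Measure.map_apply_of_aemeasurable (hY.prodMk hX.aemeasurable) hle).symm
    _ = ((μ.map Y).prod (expMeasure r)) {p | p.2 ≤ p.1} := by
        rw [(indepFun_iff_map_prod_eq_prod_map_map hY hX.aemeasurable).1 hXY.symm, hX.map_eq]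
    _ = ∫⁻ y, expMeasure r (Set.Iic y) ∂μ.map Y := Measure.prod_apply hle
    _ = ∫⁻ ω, ENNReal.ofReal (1 - exp (-(r * Y ω))) ∂μ := by
        have hmono : Monotone fun y => expMeasure r (Set.Iic y) :=
          fun _ _ h => measure_mono (Set.Iic_subset_Iic.2 h)
        rw [lintegral_map' hmono.measurable.aemeasurable hY]
        exact lintegral_congr_ae hcdf_Y
    _ = ENNReal.ofReal (1 - mgf Y μ (-r)) := by
        rw [← ofReal_integral_eq_lintegral_ofReal hint (hexp_le.mono fun _ h => sub_nonneg.2 h),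
          integral_sub (integrable_const 1) hexp_int, integral_const, probReal_univ]
        simp [mgf]

end ProbabilityTheory

theorem sinr_cdf_general
    {Ω : Type*} [MeasureSpace Ω] [IsProbabilityMeasure (ℙ : Measure Ω)]
    {m : ℕ} (ξ : Fin m → Ω → ℝ)
    (hmeas : ∀ ℓ, Measurable (ξ ℓ))
    (hindep : iIndepFun ξ ℙ)
    (hcdf : ∀ ℓ x, ℙ {ω | ξ ℓ ω ≤ x} = ENNReal.ofReal (1 - Real.exp (-x)))
    (ρR : ℝ) (hρ : 0 < ρR) (r : Fin m) (x : ℝ) (hx : 0 ≤ x) :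
    ℙ {ω | ξ r ω / (1 / ρR + ∑ ℓ ∈ Finset.univ.erase r, ξ ℓ ω) ≤ x}
      = ENNReal.ofReal (1 - Real.exp (-x / ρR) / (1 + x) ^ (m - 1)) := by
  set S := ∑ ℓ ∈ univ.erase r, ξ ℓ
  have hlaw (ℓ) : HasLaw (ξ ℓ) (expMeasure 1) ℙ :=
    hasLaw_expMeasure_of_cdf (hmeas ℓ) one_pos fun t => by rw [one_mul]; exact hcdf ℓ t
  have hS₀ : ∀ᵐ ω ∂ℙ, 0 ≤ S ω := by
    filter_upwards [ae_all_iff.2 fun ℓ => (hlaw ℓ).ae_nonneg_of_expMeasure] with ω h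
    simp only [S, Finset.sum_apply]
    exact sum_nonneg fun ℓ _ => h ℓ
  have hevent : {ω | ξ r ω / (1 / ρR + S ω) ≤ x} =ᵐ[ℙ] {ω | ξ r ω ≤ x * (1 / ρR + S ω)} := by
    rw [Filter.eventuallyEq_set]
    filter_upwards [hS₀] with ω hω
    rw [div_le_iff₀ (by positivity), mul_comm]
  have hindep_r : IndepFun (ξ r) (fun ω => x * (1 / ρR + S ω)) ℙ :=
    (hindep.indepFun_finsetSum_of_notMem hmeas (notMem_erase r univ)).symm.comp
      (φ := id) (ψ := fun s => x * (1 / ρR + s)) measurable_id (by fun_prop)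
  have hmgf_S : mgf S ℙ (-x) = (1 + x)⁻¹ ^ (m - 1) := by
    rw [hindep.mgf_sum hmeas,
      prod_congr rfl fun ℓ _ => (hlaw ℓ).mgf_expMeasure zero_le_one (by linarith), prod_const,
      card_erase_of_mem (mem_univ r), card_univ, Fintype.card_fin, sub_neg_eq_add, one_div]
  simp only [← Finset.sum_apply]
  calc ℙ {ω | ξ r ω / (1 / ρR + S ω) ≤ x}
      = ℙ {ω | ξ r ω ≤ x * (1 / ρR + S ω)} := measure_congr hevent
    _ = ENNReal.ofReal (1 - mgf (fun ω => x * (1 / ρR + S ω)) ℙ (-1)) :=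
        hindep_r.measure_le_eq_one_sub_mgf one_pos (hlaw r) (by fun_prop)
          (hS₀.mono fun ω h => by positivity)
    _ = ENNReal.ofReal (1 - Real.exp (-x / ρR) / (1 + x) ^ (m - 1)) := by
        rw [mgf_const_mul, mgf_const_add, mul_neg_one, hmgf_S, inv_pow, ← div_eq_mul_inv]
        congr 4
        ring

/-- The cdf of `SINR_r = ξ_r / (1/ρ_R + Σ_{ℓ≠r} ξ_ℓ)` for i.i.d. `Exp(1)` gains
`ξ_1,…,ξ_m` is `F(x) = 1 - e^{-x/ρ_R}/(1+x)^{m-1}` for `x ≥ 0`. -/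
theorem sinr_cdf
    {Ω : Type*} [MeasureSpace Ω] [IsProbabilityMeasure (ℙ : Measure Ω)]
    {m : ℕ} (hm : 1 ≤ m) (ξ : Fin m → Ω → ℝ)
    (hmeas : ∀ ℓ, Measurable (ξ ℓ))
    (hindep : iIndepFun ξ ℙ)
    (hcdf : ∀ ℓ x, ℙ {ω | ξ ℓ ω ≤ x} = ENNReal.ofReal (1 - Real.exp (-x)))
    (ρR : ℝ) (hρ : 0 < ρR) (r : Fin m) (x : ℝ) (hx : 0 ≤ x) :
    ℙ {ω | ξ r ω / (1 / ρR + ∑ ℓ ∈ Finset.univ.erase r, ξ ℓ ω) ≤ x}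
      = ENNReal.ofReal (1 - Real.exp (-x / ρR) / (1 + x) ^ (m - 1)) :=
  sinr_cdf_general ξ hmeas hindep hcdf ρR hρ r x hx
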